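/- arXiv:0705.3413 — 4 statements merged into one kernel-verified Lean document; each statement's English description precedes it below -/
import Mathlib

section
/- The number of 2×n Cauchon diagrams having no column consisting entirely of black squares equals 2^{n+1} − 1. -/
/-- Number of inversions of a list of naturals. -/
def invList : List ℕ → ℕ
  | [] => 0
  | x :: xs => xs.countP (fun y => decide (y < x)) + invList xs

/-- Flatten a list of edges (i,j) into the list i1,j1,i2,j2,.... -/
def flattenEdges (π : List (ℕ × ℕ)) : List ℕ := π.flatMap fun p => [p.1, p.2]

/-- The sign of a perfect matching presented as a list of edges. -/
def sgnList (π : List (ℕ × ℕ)) : ℤ := (-1) ^ invList (flattenEdges π)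

/-- `π` is a perfect matching of the label set `L` with allowed edges `R`. -/
def IsPM (L : Finset ℕ) (R : ℕ → ℕ → Prop) (π : List (ℕ × ℕ)) : Prop :=
  (∀ p ∈ π, p.1 < p.2 ∧ R p.1 p.2) ∧ (flattenEdges π).Nodup ∧
    ∀ x, x ∈ L ↔ x ∈ flattenEdges π

/-- A perfect matching in canonical form: edges sorted by smaller endpoint. -/
def IsPMsorted (L : Finset ℕ) (R : ℕ → ℕ → Prop) (π : List (ℕ × ℕ)) : Prop :=
  IsPM L R π ∧ π.Pairwise (fun p q => p.1 < q.1)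

/-- An m×n Cauchon diagram: `W i j = true` means the square (i,j) is white.
If a square is black then all squares strictly to its left are black
or all squares strictly above it are black. -/
def IsCauchon {m n : ℕ} (W : Fin m → Fin n → Bool) : Prop :=
  ∀ i j, W i j = false →
    (∀ j' : Fin n, j' < j → W i j' = false) ∨ (∀ i' : Fin m, i' < i → W i' j = false)

/-- The label of a square: 1 plus the number of white squares preceding it in
reading order (left to right along rows, top row first). -/
def cdLabel {m n : ℕ} (W : Fin m → Fin n → Bool) (p : Fin m × Fin n) : ℕ :=
  1 + (Finset.univ.filter (fun q : Fin m × Fin n =>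
      W q.1 q.2 = true ∧ (q.1 < p.1 ∨ (q.1 = p.1 ∧ q.2 < p.2)))).card

/-- The set of labels of the white squares. -/
def whiteLabels {m n : ℕ} (W : Fin m → Fin n → Bool) : Finset ℕ :=
  (Finset.univ.filter (fun p : Fin m × Fin n => W p.1 p.2 = true)).image (cdLabel W)

/-- Two labels are joinable iff their white squares lie in a common row or column. -/
def sameLine {m n : ℕ} (W : Fin m → Fin n → Bool) (a b : ℕ) : Prop :=
  ∃ p q : Fin m × Fin n, W p.1 p.2 = true ∧ W q.1 q.2 = true ∧
    cdLabel W p = a ∧ cdLabel W q = b ∧ (p.1 = q.1 ∨ p.2 = q.2)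

/-- The Pfaffian of a (labeled) Cauchon diagram: the sum of signs over all
perfect matchings (in canonical form). -/
noncomputable def cdPf {m n : ℕ} (W : Fin m → Fin n → Bool) : ℤ :=
  ∑ᶠ π ∈ {π : List (ℕ × ℕ) | IsPMsorted (whiteLabels W) (sameLine W) π}, sgnList π

/-- `p(C)`: the largest (1-based) column index whose second-row square is black. -/
def pCol {n : ℕ} (W : Fin 2 → Fin n → Bool) : ℕ :=
  (Finset.univ.filter (fun j : Fin n => W 1 j = false)).sup (fun j => (j : ℕ) + 1)

/-- `Vert(C)`: columns strictly to the right of `p(C)` whose top square is white. -/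
def vertC {n : ℕ} (W : Fin 2 → Fin n → Bool) : Finset (Fin n) :=
  Finset.univ.filter (fun j => pCol W < (j : ℕ) + 1 ∧ W 0 j = true)

/-- `sum_C(T)`: the sum of the labels of the white squares in the columns in `T`. -/
def sumC {n : ℕ} (W : Fin 2 → Fin n → Bool) (T : Finset (Fin n)) : ℕ :=
  ∑ j ∈ T, ((if W 0 j = true then cdLabel W (0, j) else 0) +
             (if W 1 j = true then cdLabel W (1, j) else 0))

/-!
In a diagram with no black column, a black square of the top row satisfies the Cauchon
condition vacuously, and a black square of the bottom row has a white square above it, so it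
needs a black row to its left. Hence such a diagram is Cauchon exactly when the black squares
of the bottom row form an initial segment, of some length `p ≤ n`; the top row is then white
over that segment and arbitrary elsewhere. This gives `∑ p ≤ n, 2 ^ (n - p) = 2 ^ (n + 1) - 1` diagrams.
-/

open Finset

section CauchonCount

variable {n : ℕ}

lemma isCauchon_iff_monotone {W : Fin 2 → Fin n → Bool} (hcol : ∀ j, ∃ i, W i j = true) :
    IsCauchon W ↔ Monotone (W 1) := by
  simp only [Fin.exists_fin_two] at hcol
  constructor
  · intro hW j' j hj'j
    rw [Bool.le_iff_imp]
    intro hj'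
    by_contra hj
    rcases hW 1 j (by simpa using hj) with hleft | habove
    · have hlt : j' < j := lt_of_le_of_ne hj'j (by rintro rfl; exact hj hj')
      simp [hleft j' hlt] at hj'
    · have := hcol j
      simp [habove 0 Fin.zero_lt_one, hj] at this
  · intro hmono
    rw [IsCauchon, Fin.forall_fin_two]
    refine ⟨fun j _ => Or.inr fun i' hi' => absurd hi' (Fin.not_lt_zero i'), fun j hj => ?_⟩
    refine Or.inl fun j' hj' => ?_
    have := hmono hj'.le
    rw [hj] at this
    exact le_bot_iff.mp this

def threshold (p : Fin (n + 1)) : Fin n → Bool := fun j => decide ((p : ℕ) ≤ j)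

lemma monotone_threshold (p : Fin (n + 1)) : Monotone (threshold p) := by
  intro i j hij
  simp only [threshold, Bool.le_iff_imp, decide_eq_true_eq]
  exact fun hi => hi.trans hij

lemma exists_threshold_eq_of_monotone {b : Fin n → Bool} (hb : Monotone b) :
    ∃ p, threshold p = b := by
  have hup : IsUpperSet {j | b j = true} := fun i j hij hi => Bool.le_iff_imp.mp (hb hij) hi
  rcases hup.eq_empty_or_Ici with hempty | ⟨a, ha⟩
  · refine ⟨Fin.last n, funext fun j => ?_⟩
    have : b j ≠ true := fun hj => (Set.eq_empty_iff_forall_notMem.mp hempty j) hj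
    simp [threshold, not_le.mpr j.isLt, this]
  · refine ⟨a.castSucc, funext fun j => ?_⟩
    have := Set.ext_iff.mp ha j
    simp only [Set.mem_ofPred_eq, Set.mem_Ici] at this
    simp [threshold, ← this]

lemma card_threshold_eq_true (p : Fin (n + 1)) :
    #{j | threshold p j = true} = n - p := by
  have hsplit := card_filter_add_card_filter_not (s := univ) (fun j : Fin n => j < (p : ℕ))
  rw [Fin.card_filter_val_lt, card_univ, Fintype.card_fin] at hsplit
  simp only [threshold, decide_eq_true_eq, ← not_lt]
  omega

lemma threshold_injective : Function.Injective (threshold (n := n)) := by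
  intro p q hpq
  have hcard := card_threshold_eq_true p
  rw [hpq, card_threshold_eq_true] at hcard
  exact Fin.ext (by omega)

lemma card_completions {ι : Type*} [Fintype ι] [DecidableEq ι] (b : ι → Bool) :
    Nat.card {a : ι → Bool // ∀ j, a j = true ∨ b j = true} = 2 ^ #{j | b j = true} := by
  rw [Nat.card_eq_fintype_card,
    Fintype.card_congr (Equiv.subtypePiEquivPi (p := fun j x => x = true ∨ b j = true)),
    Fintype.card_pi, card_filter, ← prod_pow_eq_pow_sum]
  refine prod_congr rfl fun j _ => ?_
  by_cases h : b j = true <;> simp [h, Fintype.card_subtype]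

end CauchonCount

lemma sum_fin_two_pow_sub (n : ℕ) : ∑ p : Fin (n + 1), 2 ^ (n - p) = 2 ^ (n + 1) - 1 := by
  rw [Fin.sum_univ_eq_sum_range (fun p => 2 ^ (n - p))]
  have hreflect := sum_range_reflect (fun k => 2 ^ k) (n + 1)
  simp only [Nat.add_sub_cancel] at hreflect
  rw [hreflect]
  simpa using Nat.geomSum_eq le_rfl (n + 1)

def twoRowEquiv (n : ℕ) :
    {W : Fin 2 → Fin n → Bool // Monotone (W 1) ∧ ∀ j, ∃ i, W i j = true} ≃
      Σ b : {b : Fin n → Bool // Monotone b},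
        {a : Fin n → Bool // ∀ j, a j = true ∨ b.1 j = true} where
  toFun W := ⟨⟨W.1 1, W.2.1⟩, ⟨W.1 0, fun j => Fin.exists_fin_two.mp (W.2.2 j)⟩⟩
  invFun x := ⟨![x.2.1, x.1.1], x.1.2, fun j => Fin.exists_fin_two.mpr (x.2.2 j)⟩
  left_inv _ := Subtype.ext (funext (Fin.forall_fin_two.mpr ⟨rfl, rfl⟩))
  right_inv _ := rfl

noncomputable def thresholdEquiv (n : ℕ) : Fin (n + 1) ≃ {b : Fin n → Bool // Monotone b} :=
  Equiv.ofBijective (fun p => ⟨threshold p, monotone_threshold p⟩)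
    ⟨fun _ _ h => threshold_injective (congrArg Subtype.val h),
      fun b => (exists_threshold_eq_of_monotone b.2).imp fun _ h => Subtype.ext h⟩

/-- The number of 2×n Cauchon diagrams with no entirely black column is 2^(n+1) - 1. -/
theorem stmt1 (n : ℕ) :
    Nat.card {W : Fin 2 → Fin n → Bool //
        IsCauchon W ∧ ∀ j : Fin n, ∃ i : Fin 2, W i j = true} = 2 ^ (n + 1) - 1 := by
  have cauchonEquiv := Equiv.subtypeEquivRight fun W : Fin 2 → Fin n → Bool =>
    and_congr_left (isCauchon_iff_monotone (W := W))
  rw [Nat.card_congr (cauchonEquiv.trans (twoRowEquiv n)),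
    Nat.card_sigma, ← (thresholdEquiv n).sum_comp]
  simp only [card_completions]
  convert sum_fin_two_pow_sub n using 3 with p
  exact card_threshold_eq_true p
end

section
/- For all positive integers m and n, the number of m×n Cauchon diagrams satisfies |C_{m,n}| = Σ_{i=0}^{n} binomial(n, i) · |C'_{m, n−i}|, where |C_{m,0}| = |C'_{m,0}| = 1. -/
/-!
Group the Cauchon diagrams by their set `S` of entirely black columns. Deleting these columns
is a bijection onto the diagrams in `C'_{m, n - #S}`: the condition is preserved under deleting
columns since it only compares a square with squares to its left or above it, and reinserting
black columns keeps it because a black square in an inserted column has only black squares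
above it. Counting the sets `S` of each size then produces the binomial coefficients.
-/

open Finset

theorem IsCauchon.comp_strictMono {m n k : ℕ} {W : Fin m → Fin n → Bool} (hW : IsCauchon W)
    {f : Fin k → Fin n} (hf : StrictMono f) : IsCauchon fun i j => W i (f j) := fun i j h =>
  (hW i (f j) h).imp (fun hl _ hj' => hl _ (hf hj')) id

namespace Cauchon

variable {m n : ℕ}

def blackCols (W : Fin m → Fin n → Bool) : Finset (Fin n) :=
  {j | ∀ i, W i j = false}

@[simp]
theorem mem_blackCols {W : Fin m → Fin n → Bool} {j : Fin n} :
    j ∈ blackCols W ↔ ∀ i, W i j = false := by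
  simp [blackCols]

def complOrderIso (S : Finset (Fin n)) : Fin (n - #S) ≃o {j // j ∈ Sᶜ} :=
  Sᶜ.orderIsoOfFin (by simp [card_compl])

def deleteCols (S : Finset (Fin n)) (W : Fin m → Fin n → Bool) :
    Fin m → Fin (n - #S) → Bool :=
  fun i j => W i (complOrderIso S j)

def insertBlackCols (S : Finset (Fin n)) (W : Fin m → Fin (n - #S) → Bool) :
    Fin m → Fin n → Bool :=
  fun i j => if h : j ∈ Sᶜ then W i ((complOrderIso S).symm ⟨j, h⟩) else false

theorem isCauchon_deleteCols (S : Finset (Fin n)) {W : Fin m → Fin n → Bool}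
    (hW : IsCauchon W) : IsCauchon (deleteCols S W) :=
  hW.comp_strictMono fun _ _ h => Subtype.coe_lt_coe.mpr ((complOrderIso S).strictMono h)

theorem deleteCols_exists_white {S : Finset (Fin n)} {W : Fin m → Fin n → Bool}
    (hS : blackCols W ⊆ S) (j : Fin (n - #S)) : ∃ i, deleteCols S W i j = true := by
  have hj : (complOrderIso S j : Fin n) ∉ blackCols W := fun h =>
    mem_compl.mp (complOrderIso S j).2 (hS h)
  simpa [deleteCols] using hj

theorem isCauchon_insertBlackCols (S : Finset (Fin n)) {W : Fin m → Fin (n - #S) → Bool}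
    (hW : IsCauchon W) : IsCauchon (insertBlackCols S W) := by
  intro i j h
  by_cases hj : j ∈ Sᶜ
  · rw [insertBlackCols, dif_pos hj] at h
    refine (hW i _ h).imp (fun hl j' hj' => ?_) (fun ha i' hi' => ?_)
    · by_cases hj'' : j' ∈ Sᶜ
      · rw [insertBlackCols, dif_pos hj'']
        exact hl _ ((complOrderIso S).symm.strictMono
          (show (⟨j', hj''⟩ : {j // j ∈ Sᶜ}) < ⟨j, hj⟩ from hj'))
      · rw [insertBlackCols, dif_neg hj'']
    · rw [insertBlackCols, dif_pos hj]
      exact ha i' hi'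
  · exact Or.inr fun i' _ => by rw [insertBlackCols, dif_neg hj]

theorem blackCols_insertBlackCols (S : Finset (Fin n)) {W : Fin m → Fin (n - #S) → Bool}
    (hW : ∀ j, ∃ i, W i j = true) : blackCols (insertBlackCols S W) = S := by
  ext j
  by_cases hj : j ∈ Sᶜ
  · obtain ⟨i, hi⟩ := hW ((complOrderIso S).symm ⟨j, hj⟩)
    simp only [mem_blackCols, insertBlackCols, dif_pos hj, mem_compl.mp hj, iff_false,
      not_forall]
    exact ⟨i, by simp [hi]⟩
  · simp_all [insertBlackCols]

theorem insertBlackCols_deleteCols {S : Finset (Fin n)} {W : Fin m → Fin n → Bool}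
    (hS : S ⊆ blackCols W) : insertBlackCols S (deleteCols S W) = W := by
  funext i j
  by_cases hj : j ∈ Sᶜ
  · simp [insertBlackCols, deleteCols, hj]
  · rw [insertBlackCols, dif_neg hj, mem_blackCols.mp (hS (by simpa using hj)) i]

theorem deleteCols_insertBlackCols (S : Finset (Fin n)) (W : Fin m → Fin (n - #S) → Bool) :
    deleteCols S (insertBlackCols S W) = W := by
  funext i j
  simp [deleteCols, insertBlackCols]

def fiberEquiv (S : Finset (Fin n)) :
    {W : {W : Fin m → Fin n → Bool // IsCauchon W} // blackCols W.1 = S} ≃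
      {W : Fin m → Fin (n - #S) → Bool // IsCauchon W ∧ ∀ j, ∃ i, W i j = true} where
  toFun W := ⟨deleteCols S W.1.1, isCauchon_deleteCols S W.1.2, deleteCols_exists_white W.2.le⟩
  invFun W := ⟨⟨insertBlackCols S W.1, isCauchon_insertBlackCols S W.2.1⟩,
    blackCols_insertBlackCols S W.2.2⟩
  left_inv W := Subtype.ext (Subtype.ext (insertBlackCols_deleteCols W.2.ge))
  right_inv W := Subtype.ext (deleteCols_insertBlackCols S W.1)

end Cauchon

theorem stmt2_general (m n : ℕ) :
    Nat.card {W : Fin m → Fin n → Bool // IsCauchon W} =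
      ∑ i ∈ Finset.range (n + 1), Nat.choose n i *
        Nat.card {W : Fin m → Fin (n - i) → Bool //
          IsCauchon W ∧ ∀ j : Fin (n - i), ∃ i' : Fin m, W i' j = true} := by
  let cardNoBlackCol (k : ℕ) :=
    Nat.card {W : Fin m → Fin k → Bool // IsCauchon W ∧ ∀ j, ∃ i, W i j = true}
  calc Nat.card {W : Fin m → Fin n → Bool // IsCauchon W}
      = ∑ S : Finset (Fin n), Nat.card {W : {W : Fin m → Fin n → Bool // IsCauchon W} //
          Cauchon.blackCols W.1 = S} := by
        rw [← Nat.card_sigma, Nat.card_congr (Equiv.sigmaFiberEquiv _)]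
    _ = ∑ S ∈ (univ : Finset (Fin n)).powerset, cardNoBlackCol (n - #S) := by
        rw [powerset_univ]
        exact sum_congr rfl fun S _ => Nat.card_congr (Cauchon.fiberEquiv S)
    _ = _ := by
        rw [sum_powerset_apply_card (fun i => cardNoBlackCol (n - i)), card_univ, Fintype.card_fin]
        rfl

/-- |C_{m,n}| = Σ_{i=0}^n  C(n,i) |C'_{m,n-i}|. -/
theorem stmt2 (m n : ℕ) (hm : 0 < m) (hn : 0 < n) :
    Nat.card {W : Fin m → Fin n → Bool // IsCauchon W} =
      ∑ i ∈ Finset.range (n + 1), Nat.choose n i *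
        Nat.card {W : Fin m → Fin (n - i) → Bool //
          IsCauchon W ∧ ∀ j : Fin (n - i), ∃ i' : Fin m, W i' j = true} :=
  stmt2_general m n
end

section
/- For every positive integer n, Σ_{m=1}^{n} binomial(n,m)·(2^m − 1)·χ(m odd) + Σ_{m=1}^{n} binomial(n,m)·2^{m−1}·χ(m even) + 1 = (3^{n+1} − 2^{n+1} + (−1)^{n+1} + 2)/4. -/
/-! Writing the parity indicators as `(1 ∓ (-1)^m) / 2`, the weight of `binomial(n, m)` becomes a
fixed linear combination of `2^m`, `(-2)^m`, `1` and `(-1)^m`, and the binomial theorem sums each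
of these against `binomial(n, m)` to `3^n`, `(-1)^n`, `2^n` and `0^n`. -/

open Finset

theorem sum_Icc_choose_mul_pow {R : Type*} [CommRing R] (n : ℕ) (x : R) :
    ∑ m ∈ Icc 1 n, (n.choose m : R) * x ^ m = (x + 1) ^ n - 1 := by
  rw [add_pow, range_eq_Ico, sum_eq_sum_Ico_succ_bot (Nat.add_pos_right n one_pos),
    zero_add, Ico_add_one_right_eq_Icc]
  simp only [one_pow, mul_one, pow_zero, Nat.choose_zero_right, Nat.cast_one,
    add_sub_cancel_left, mul_comm]

theorem parity_weight_eq_pow_combination {m : ℕ} (hm : 1 ≤ m) :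
    ((2 : ℚ) ^ m - 1) * (if Odd m then 1 else 0) + 2 ^ (m - 1) * (if Even m then 1 else 0) =
      3 / 4 * 2 ^ m - 1 / 4 * (-2) ^ m - 1 / 2 + 1 / 2 * (-1) ^ m := by
  obtain ⟨k, rfl⟩ := Nat.exists_eq_add_of_le' hm
  rcases Nat.even_or_odd (k + 1) with h | h
  · simp only [h, h.neg_pow, Nat.not_odd_iff_even.mpr h, Nat.add_sub_cancel, if_true, if_false]
    ring
  · simp only [h, h.neg_pow, Nat.not_even_iff_odd.mpr h, if_true, if_false]
    ring

/-- The final combinatorial identity counting primitive H-primes in O_q(M_{2,n}). -/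
theorem stmt3 (n : ℕ) (hn : 0 < n) :
    (∑ m ∈ Finset.Icc 1 n, (n.choose m : ℚ) * (2 ^ m - 1) * (if Odd m then 1 else 0)) +
      (∑ m ∈ Finset.Icc 1 n, (n.choose m : ℚ) * 2 ^ (m - 1) * (if Even m then 1 else 0)) + 1 =
      (3 ^ (n + 1) - 2 ^ (n + 1) + (-1) ^ (n + 1) + 2) / 4 := by
  have hsplit : (∑ m ∈ Icc 1 n, (n.choose m : ℚ) * (2 ^ m - 1) * (if Odd m then 1 else 0)) +
      (∑ m ∈ Icc 1 n, (n.choose m : ℚ) * 2 ^ (m - 1) * (if Even m then 1 else 0)) =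
      3 / 4 * ∑ m ∈ Icc 1 n, (n.choose m : ℚ) * 2 ^ m
        - 1 / 4 * ∑ m ∈ Icc 1 n, (n.choose m : ℚ) * (-2) ^ m
        - 1 / 2 * ∑ m ∈ Icc 1 n, (n.choose m : ℚ) * 1 ^ m
        + 1 / 2 * ∑ m ∈ Icc 1 n, (n.choose m : ℚ) * (-1) ^ m := by
    simp only [mul_sum, ← sum_add_distrib, ← sum_sub_distrib]
    refine sum_congr rfl fun m hm => ?_
    linear_combination (n.choose m : ℚ) * parity_weight_eq_pow_combination (mem_Icc.mp hm).1
  rw [hsplit, sum_Icc_choose_mul_pow, sum_Icc_choose_mul_pow, sum_Icc_choose_mul_pow,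
    sum_Icc_choose_mul_pow, neg_add_cancel, zero_pow hn.ne']
  ring
end

section
/- The ratio of (3^{n+1} − 2^{n+1} + (−1)^{n+1} + 2)/4 to 2·3^n − 2^n tends to 3/8 as n → ∞. -/
/-! Divide numerator and denominator by `3 ^ n`: the numerator becomes
`(3 - 2 (2/3)^n - (-1/3)^n + 2 (1/3)^n) / 4 → 3/4` and the denominator `2 - (2/3)^n → 2`. -/

open Filter Topology

theorem tendsto_pow_div_pow_atTop_nhds_zero {r s : ℝ} (h : |r| < |s|) :
    Tendsto (fun n : ℕ => r ^ n / s ^ n) atTop (𝓝 0) := by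
  simpa only [div_pow] using tendsto_pow_atTop_nhds_zero_of_abs_lt_one (r := r / s)
    (by rwa [abs_div, div_lt_one ((abs_nonneg r).trans_lt h)])

theorem Filter.Tendsto.div_of_tendsto_div_scale {α K : Type*} [GroupWithZero K]
    [TopologicalSpace K] [ContinuousMul K] [ContinuousInv₀ K] {l : Filter α} {f g s : α → K}
    {a b : K} (hs : ∀ x, s x ≠ 0) (hf : Tendsto (fun x => f x / s x) l (𝓝 a))
    (hg : Tendsto (fun x => g x / s x) l (𝓝 b)) (hb : b ≠ 0) :
    Tendsto (fun x => f x / g x) l (𝓝 (a / b)) :=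
  (hf.div hg hb).congr fun x => div_div_div_cancel_right₀ (hs x) (f x) (g x)

theorem tendsto_primitive_count_div_three_pow :
    Tendsto (fun n : ℕ => ((3 ^ (n + 1) - 2 ^ (n + 1) + (-1 : ℝ) ^ (n + 1) + 2) / 4) / 3 ^ n)
      atTop (𝓝 (3 / 4)) := by
  have hscaled : ∀ n : ℕ, ((3 ^ (n + 1) - 2 ^ (n + 1) + (-1 : ℝ) ^ (n + 1) + 2) / 4) / 3 ^ n =
      (3 - 2 * (2 ^ n / 3 ^ n) - (-1) ^ n / 3 ^ n + 2 * (1 ^ n / 3 ^ n)) / 4 := fun n => by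
    field_simp
    ring
  have h2 := tendsto_pow_div_pow_atTop_nhds_zero (r := 2) (s := 3) (by norm_num [abs_of_pos])
  have hneg := tendsto_pow_div_pow_atTop_nhds_zero (r := -1) (s := 3) (by norm_num [abs_of_pos])
  have h1 := tendsto_pow_div_pow_atTop_nhds_zero (r := 1) (s := 3) (by norm_num [abs_of_pos])
  simp only [hscaled]
  simpa using ((((tendsto_const_nhds (x := (3 : ℝ))).sub (h2.const_mul 2)).sub hneg).add
    (h1.const_mul 2)).div_const 4

theorem tendsto_hPrime_count_div_three_pow :
    Tendsto (fun n : ℕ => (2 * 3 ^ n - 2 ^ n : ℝ) / 3 ^ n) atTop (𝓝 2) := by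
  have hscaled : ∀ n : ℕ, (2 * 3 ^ n - 2 ^ n : ℝ) / 3 ^ n = 2 - 2 ^ n / 3 ^ n := fun n => by
    field_simp
  simp only [hscaled]
  simpa using (tendsto_const_nhds (x := (2 : ℝ))).sub
    (tendsto_pow_div_pow_atTop_nhds_zero (r := 2) (s := 3) (by norm_num [abs_of_pos]))

/-- The proportion of primitive H-primes in O_q(M_{2,n}) tends to 3/8. -/
theorem stmt14 :
    Filter.Tendsto (fun n : ℕ =>
      ((3 ^ (n + 1) - 2 ^ (n + 1) + (-1 : ℝ) ^ (n + 1) + 2) / 4) /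
        (2 * 3 ^ n - 2 ^ n)) Filter.atTop (nhds (3 / 8)) := by
  convert tendsto_primitive_count_div_three_pow.div_of_tendsto_div_scale
    (fun n => pow_ne_zero n three_ne_zero) tendsto_hPrime_count_div_three_pow two_ne_zero using 2
  norm_num
end
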